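/- Fix x ∈ ℝ with x > −1. Then the function β ↦ log(β·(1+x)^(1−β) + (1−β)·(1+x)^(−β)) / (β·(1−β)) tends to log(1+x) − x/(1+x) as β tends to 1 within the open interval (0,1). -/

import Mathlib

open Real Filter Topology

/-!
Since `β (1+x)^(1-β) + (1-β) (1+x)^(-β) = (1+x)^(-β) (1 + β x)`, the quotient equals
`g β / (β (1 - β))` with `g β = log (1 + β x) - β log (1 + x)`. As `g 1 = 0`, this is
`-(1/β)` times the slope of `g` at `1`, which tends to `-g'(1) = log (1 + x) - x / (1 + x)`.
-/

theorem mul_rpow_one_sub_add_one_sub_mul_rpow_neg {t : ℝ} (ht : 0 < t) (β : ℝ) :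
    β * t ^ (1 - β) + (1 - β) * t ^ (-β) = t ^ (-β) * (1 + β * (t - 1)) := by
  have : t ^ (1 - β) = t ^ (-β) * t := by
    rw [← rpow_add_one ht.ne']; ring_nf
  rw [this]; ring

theorem log_mul_rpow_one_sub_add_one_sub_mul_rpow_neg {x : ℝ} (hx : 0 < 1 + x) {β : ℝ}
    (hβ : 1 + β * x ≠ 0) :
    log (β * (1 + x) ^ (1 - β) + (1 - β) * (1 + x) ^ (-β))
      = log (1 + β * x) - β * log (1 + x) := by
  rw [mul_rpow_one_sub_add_one_sub_mul_rpow_neg hx, add_sub_cancel_left,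
    log_mul (rpow_pos_of_pos hx _).ne' hβ, log_rpow hx]
  ring

theorem hasDerivAt_log_one_add_mul_sub_mul_log {x : ℝ} (hx : 1 + x ≠ 0) :
    HasDerivAt (fun β => log (1 + β * x) - β * log (1 + x)) (x / (1 + x) - log (1 + x)) 1 := by
  have hlin : HasDerivAt (fun β : ℝ => 1 + β * x) x 1 := by
    simpa using ((hasDerivAt_id (1 : ℝ)).mul_const x).const_add 1
  have hlog : HasDerivAt (fun β : ℝ => log (1 + β * x)) (x / (1 + x)) 1 := by
    simpa using hlin.log (by simpa using hx)
  exact hlog.sub (by simpa using (hasDerivAt_id (1 : ℝ)).mul_const (log (1 + x)))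

theorem tendsto_div_mul_one_sub_of_hasDerivAt {g : ℝ → ℝ} {d : ℝ} (hg : HasDerivAt g d 1)
    (hg1 : g 1 = 0) :
    Tendsto (fun β => g β / (β * (1 - β))) (𝓝[≠] 1) (𝓝 (-d)) := by
  have hslope : Tendsto (slope g 1) (𝓝[≠] 1) (𝓝 d) := hasDerivAt_iff_tendsto_slope.mp hg
  have hinv : Tendsto (fun β : ℝ => -β⁻¹) (𝓝[≠] 1) (𝓝 (-1)) := by
    simpa using ((tendsto_inv₀ (one_ne_zero' ℝ)).neg).mono_left nhdsWithin_le_nhds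
  have hprod := hinv.mul hslope
  rw [neg_one_mul] at hprod
  refine hprod.congr fun β => ?_
  rw [slope_def_field, hg1, sub_zero, show β - 1 = -(1 - β) by ring]
  simp only [div_eq_mul_inv, mul_inv, inv_neg]
  ring

theorem renyi_logdet_limit_beta_one (x : ℝ) (hx : -1 < x) :
    Tendsto (fun β : ℝ =>
        Real.log (β * (1 + x) ^ (1 - β) + (1 - β) * (1 + x) ^ (-β)) / (β * (1 - β)))
      (nhdsWithin 1 (Set.Ioo (0 : ℝ) 1)) (nhds (Real.log (1 + x) - x / (1 + x))) := by
  have hx' : 0 < 1 + x := by linarith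
  have hlim := (tendsto_div_mul_one_sub_of_hasDerivAt
    (hasDerivAt_log_one_add_mul_sub_mul_log hx'.ne') (by simp)).mono_left
    (nhdsWithin_mono 1 fun β (hβ : β ∈ Set.Ioo (0 : ℝ) 1) => hβ.2.ne)
  rw [neg_sub] at hlim
  refine hlim.congr' ?_
  filter_upwards [self_mem_nhdsWithin] with β ⟨hβ0, hβ1⟩
  have hpos : 0 < 1 + β * x := by nlinarith
  rw [log_mul_rpow_one_sub_add_one_sub_mul_rpow_neg hx' hpos.ne']
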